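/- Let g be a positive integer, let τ be a symmetric g×g complex matrix whose imaginary part is positive definite, let z ∈ ℂ^g, and let ε, δ ∈ ℝ^g. Then the family indexed by n ∈ ℤ^g with terms exp(πi·(n+ε/2)ᵀτ(n+ε/2) + (n+ε/2)ᵀ(z+δ/2)) is summable; in particular the series defining the theta function with characteristic θ[ε;δ](z|τ) converges absolutely. -/

import Mathlib

open Matrix

/-- 1D summability: `exp(-a(m+c)² + b|m+c|)` is summable over `m : ℤ` for `a > 0`, `b ≥ 0`. -/
lemma summable_exp_quad_lin (a b c : ℝ) (ha : 0 < a) (hb : 0 ≤ b) :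
    Summable fun m : ℤ => Real.exp (-a * ((m : ℝ) + c) ^ 2 + b * |(m : ℝ) + c|) := by
  have hT : 0 < a / Real.pi := div_pos ha Real.pi_pos
  have hsum := (summable_pow_mul_jacobiTheta₂_term_bound
      ((2 * a * |c| + b) / (2 * Real.pi)) hT 0).mul_left (Real.exp (b * |c|))
  refine hsum.of_nonneg_of_le (fun m => Real.exp_nonneg _) (fun m => ?_)
  rw [pow_zero, one_mul, ← Real.exp_add, Real.exp_le_exp]
  push_cast
  have hπ := Real.pi_pos
  have h1 : |(m : ℝ) + c| ≤ |(m : ℝ)| + |c| := abs_add_le _ _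
  have h2 : -(|(m : ℝ)| * |c|) ≤ (m : ℝ) * c := by
    rw [← abs_mul]; exact neg_abs_le _
  have h3 : -Real.pi * (a / Real.pi * (m : ℝ) ^ 2 -
      2 * ((2 * a * |c| + b) / (2 * Real.pi)) * |(m : ℝ)|)
      = -a * (m : ℝ) ^ 2 + (2 * a * |c| + b) * |(m : ℝ)| := by
    field_simp; ring
  rw [h3]
  nlinarith [sq_nonneg ((m : ℝ) + c), abs_nonneg ((m : ℝ)), abs_nonneg c,
    sq_abs ((m : ℝ)), mul_nonneg hb (abs_nonneg ((m : ℝ) + c)), sq_nonneg c]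

/-- Summability of a product of summable nonnegative families over a pi type. -/
lemma summable_pi_prod : ∀ (g : ℕ) (f : Fin g → ℤ → ℝ),
    (∀ i m, 0 ≤ f i m) → (∀ i, Summable (f i)) →
    Summable fun n : Fin g → ℤ => ∏ i, f i (n i) := by
  intro g
  induction g with
  | zero => intro f _ _; exact Summable.of_finite
  | succ k ih =>
    intro f hpos hsum
    have hmain := ((hsum 0).mul_of_nonneg
      (ih (fun i => f i.succ) (fun i m => hpos _ _) (fun i => hsum _))
      (fun m => hpos _ _) (fun n => Finset.prod_nonneg fun i _ => hpos _ _))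
    refine ((Fin.consEquiv fun _ : Fin (k+1) => ℤ).summable_iff).mp ?_
    refine hmain.congr fun p => ?_
    simp [Fin.prod_univ_succ, Fin.consEquiv]

/-- Coercivity of a positive definite real quadratic form. -/
lemma posdef_coercive {g : ℕ} (hg : 0 < g) {Y : Matrix (Fin g) (Fin g) ℝ}
    (hY : Y.PosDef) :
    ∃ c > 0, ∀ x : Fin g → ℝ, c * ∑ i, x i ^ 2 ≤ x ⬝ᵥ Y.mulVec x := by
  have : Nonempty (Fin g) := ⟨⟨0, hg⟩⟩
  have hcont : Continuous fun x : Fin g → ℝ => x ⬝ᵥ Y.mulVec x := by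
    simp only [dotProduct, mulVec]
    exact continuous_finset_sum _ fun i _ => (continuous_apply i).mul
      (continuous_finset_sum _ fun j _ => continuous_const.mul (continuous_apply j))
  have hcompact : IsCompact (Metric.sphere (0 : Fin g → ℝ) 1) := isCompact_sphere _ _
  have hne : (Metric.sphere (0 : Fin g → ℝ) 1).Nonempty := by
    refine ⟨fun _ => 1, ?_⟩
    simp [Metric.mem_sphere, dist_zero_right, pi_norm_const]
  obtain ⟨x₀, hx₀s, hx₀min⟩ := hcompact.exists_isMinOn hne hcont.continuousOn
  have hx₀ : x₀ ≠ 0 := by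
    intro h
    have := Metric.mem_sphere.mp hx₀s
    rw [h] at this; simp at this
  set m := x₀ ⬝ᵥ Y.mulVec x₀ with hm
  have hm0 : 0 < m := by simpa using hY.dotProduct_mulVec_pos hx₀
  refine ⟨m / g, div_pos hm0 (Nat.cast_pos.mpr hg), fun x => ?_⟩
  rcases eq_or_ne x 0 with rfl | hx
  · simp
  · have hnx : (0 : ℝ) < ‖x‖ := norm_pos_iff.mpr hx
    have key : m * ‖x‖ ^ 2 ≤ x ⬝ᵥ Y.mulVec x := by
      have hu : (‖x‖⁻¹ • x) ∈ Metric.sphere (0 : Fin g → ℝ) 1 := by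
        simp [norm_smul, abs_of_pos (inv_pos.mpr hnx), inv_mul_cancel₀ hnx.ne']
      have hmin := hx₀min hu
      have hq : (‖x‖⁻¹ • x) ⬝ᵥ Y.mulVec (‖x‖⁻¹ • x)
          = ‖x‖⁻¹ * ‖x‖⁻¹ * (x ⬝ᵥ Y.mulVec x) := by
        rw [Matrix.mulVec_smul, smul_dotProduct, dotProduct_smul]
        simp [smul_smul, mul_assoc]
      rw [Set.mem_setOf_eq] at hmin
      have h2 : m ≤ ‖x‖⁻¹ * ‖x‖⁻¹ * (x ⬝ᵥ Y.mulVec x) := by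
        calc m ≤ (‖x‖⁻¹ • x) ⬝ᵥ Y.mulVec (‖x‖⁻¹ • x) := hmin
          _ = _ := hq
      have hxx : ‖x‖⁻¹ * ‖x‖⁻¹ * ‖x‖ ^ 2 = 1 := by
        field_simp [pow_two]
      calc m * ‖x‖ ^ 2 ≤ (‖x‖⁻¹ * ‖x‖⁻¹ * (x ⬝ᵥ Y.mulVec x)) * ‖x‖ ^ 2 := by
            nlinarith [sq_nonneg ‖x‖]
        _ = (‖x‖⁻¹ * ‖x‖⁻¹ * ‖x‖ ^ 2) * (x ⬝ᵥ Y.mulVec x) := by ring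
        _ = x ⬝ᵥ Y.mulVec x := by rw [hxx, one_mul]
    have hsq : ∀ i, x i ^ 2 ≤ ‖x‖ ^ 2 := fun i => by
      calc x i ^ 2 = ‖x i‖ ^ 2 := by rw [Real.norm_eq_abs, sq_abs]
        _ ≤ ‖x‖ ^ 2 := pow_le_pow_left₀ (norm_nonneg _) (norm_le_pi_norm x i) 2
    have hsum_le : ∑ i, x i ^ 2 ≤ g * ‖x‖ ^ 2 := by
      calc ∑ i, x i ^ 2 ≤ ∑ _i : Fin g, ‖x‖ ^ 2 := Finset.sum_le_sum fun i _ => hsq i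
        _ = g * ‖x‖ ^ 2 := by simp [Finset.sum_const, nsmul_eq_mul]
    calc m / g * ∑ i, x i ^ 2 ≤ m / g * (g * ‖x‖ ^ 2) :=
          mul_le_mul_of_nonneg_left hsum_le (le_of_lt (div_pos hm0 (Nat.cast_pos.mpr hg)))
      _ = m * ‖x‖ ^ 2 := by
          field_simp
      _ ≤ _ := key

/-- For `τ` a symmetric `g×g` complex matrix with positive definite
imaginary part, `z ∈ ℂ^g` and `ε, δ ∈ ℝ^g`, the family indexed by `n ∈ ℤ^g` with terms
`exp(πi·(n+ε/2)ᵀτ(n+ε/2) + (n+ε/2)ᵀ(z+δ/2))` is summable, i.e. the theta series with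
characteristic `[ε; δ]` converges absolutely. -/
theorem theta_series_summable (g : ℕ) (hg : 0 < g) (τ : Matrix (Fin g) (Fin g) ℂ)
    (hsymm : τ.IsSymm) (hpos : (Matrix.of fun i j => (τ i j).im).PosDef)
    (z : Fin g → ℂ) (ε δ : Fin g → ℝ) :
    Summable fun n : Fin g → ℤ =>
      Complex.exp
        ((Real.pi : ℂ) * Complex.I *
            ((fun i => (n i : ℂ) + (ε i : ℂ) / 2) ⬝ᵥ
              τ.mulVec fun i => (n i : ℂ) + (ε i : ℂ) / 2) +
          (fun i => (n i : ℂ) + (ε i : ℂ) / 2) ⬝ᵥ fun i => z i + (δ i : ℂ) / 2) := by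
  obtain ⟨c, hc, hY⟩ := posdef_coercive hg hpos
  set u : Fin g → ℝ := fun i => (z i).re + δ i / 2 with hu
  set M : ℝ := ∑ i, |u i| with hM
  have hM0 : 0 ≤ M := Finset.sum_nonneg fun i _ => abs_nonneg _
  have hMi : ∀ i, |u i| ≤ M := fun i =>
    Finset.single_le_sum (fun j _ => abs_nonneg (u j)) (Finset.mem_univ i)
  set f : Fin g → ℤ → ℝ := fun i m =>
    Real.exp (-(Real.pi * c) * ((m : ℝ) + ε i / 2) ^ 2 + M * |(m : ℝ) + ε i / 2|) with hf
  have hfsum : Summable fun n : Fin g → ℤ => ∏ i, f i (n i) :=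
    summable_pi_prod g f (fun i m => Real.exp_nonneg _)
      (fun i => summable_exp_quad_lin _ _ _ (mul_pos Real.pi_pos hc) hM0)
  refine hfsum.of_norm_bounded fun n => ?_
  set x : Fin g → ℝ := fun i => (n i : ℝ) + ε i / 2 with hx
  have hvx : (fun i => (n i : ℂ) + (ε i : ℂ) / 2) = fun i => ((x i : ℝ) : ℂ) := by
    funext i; simp only [hx]; push_cast; ring
  rw [hvx]
  have him : ((fun i => ((x i : ℝ) : ℂ)) ⬝ᵥ τ.mulVec fun i => ((x i : ℝ) : ℂ)).im
      = x ⬝ᵥ (Matrix.of fun i j => (τ i j).im).mulVec x := by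
    simp only [dotProduct, mulVec, Complex.im_sum, Complex.re_sum, Complex.mul_im,
      Complex.ofReal_re, Complex.ofReal_im, Matrix.of_apply, zero_mul, add_zero, mul_zero,
      zero_add, Finset.mul_sum]
  have hLre : ((fun i => ((x i : ℝ) : ℂ)) ⬝ᵥ fun i => z i + (δ i : ℂ) / 2).re
      = x ⬝ᵥ u := by
    simp only [dotProduct, Complex.re_sum, Complex.mul_re, Complex.ofReal_re, Complex.ofReal_im,
      zero_mul, sub_zero, Complex.add_re, hu]
    refine Finset.sum_congr rfl fun i _ => ?_
    norm_num [Complex.div_re]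
  have hre : ((Real.pi : ℂ) * Complex.I *
            ((fun i => ((x i : ℝ) : ℂ)) ⬝ᵥ τ.mulVec fun i => ((x i : ℝ) : ℂ)) +
          (fun i => ((x i : ℝ) : ℂ)) ⬝ᵥ fun i => z i + (δ i : ℂ) / 2).re
      = -Real.pi * (x ⬝ᵥ (Matrix.of fun i j => (τ i j).im).mulVec x) + x ⬝ᵥ u := by
    rw [← him, ← hLre]
    simp [Complex.add_re, mul_assoc, Complex.I_mul_re]
  rw [Complex.norm_exp, hre]
  have h4 : Real.pi * (c * ∑ i, x i ^ 2) ≤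
      Real.pi * (x ⬝ᵥ (Matrix.of fun i j => (τ i j).im).mulVec x) :=
    mul_le_mul_of_nonneg_left (hY x) Real.pi_pos.le
  have hlin : x ⬝ᵥ u ≤ ∑ i, M * |x i| := by
    refine Finset.sum_le_sum fun i _ => ?_
    calc x i * u i ≤ |x i * u i| := le_abs_self _
      _ = |x i| * |u i| := abs_mul _ _
      _ ≤ |x i| * M := mul_le_mul_of_nonneg_left (hMi i) (abs_nonneg _)
      _ = M * |x i| := mul_comm _ _
  have hexp : -Real.pi * (x ⬝ᵥ (Matrix.of fun i j => (τ i j).im).mulVec x) + x ⬝ᵥ u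
      ≤ ∑ i, (-(Real.pi * c) * x i ^ 2 + M * |x i|) := by
    have e1 : ∑ i, (-(Real.pi * c) * x i ^ 2 + M * |x i|)
        = -Real.pi * (c * ∑ i, x i ^ 2) + ∑ i, M * |x i| := by
      rw [Finset.sum_add_distrib]
      congr 1
      rw [show -Real.pi * (c * ∑ i, x i ^ 2) = -(Real.pi * c) * ∑ i, x i ^ 2 by ring,
        Finset.mul_sum]
    rw [e1]
    linarith [h4, hlin]
  calc Real.exp _ ≤ Real.exp (∑ i, (-(Real.pi * c) * x i ^ 2 + M * |x i|)) :=
        Real.exp_le_exp.2 hexp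
    _ = ∏ i, f i (n i) := by
        rw [Real.exp_sum]
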